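/- arXiv:1805.02515 — 5 statements merged into one kernel-verified Lean document; each statement's English description precedes it below -/
import Mathlib

section
/- De Caen's inequality: for events E₁,…,E_M in a probability space with each P(E_i) > 0, P(⋃_{i=1}^M E_i) ≥ Σ_{i=1}^M [P(E_i)]² / (Σ_{j=1}^M P(E_i ∩ E_j)). -/
open MeasureTheory Finset

theorem stmt6 {Ω : Type*} [MeasurableSpace Ω] (μ : MeasureTheory.Measure Ω)
    [MeasureTheory.IsProbabilityMeasure μ] (M : ℕ) (E : Fin M → Set Ω)
    (hmeas : ∀ i, MeasurableSet (E i)) (hpos : ∀ i, 0 < (μ (E i)).toReal) :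
    (μ (⋃ i, E i)).toReal ≥
      ∑ i, ((μ (E i)).toReal) ^ 2 / (∑ j, (μ (E i ∩ E j)).toReal) := by
  classical
  set A : Finset (Fin M) → Set Ω := fun S => ⋂ i, if i ∈ S then E i else (E i)ᶜ with hA
  have memA : ∀ (S : Finset (Fin M)) (ω : Ω), ω ∈ A S ↔ ∀ i, ω ∈ E i ↔ i ∈ S := by
    intro S ω
    simp only [hA, Set.mem_iInter]
    constructor
    · intro h i
      have := h i
      by_cases hi : i ∈ S <;> simp [hi] at this ⊢ <;> tauto
    · intro h i
      by_cases hi : i ∈ S <;> simp [hi, h i]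
  have measA : ∀ S, MeasurableSet (A S) := by
    intro S
    refine MeasurableSet.iInter fun i => ?_
    by_cases hi : i ∈ S <;> simp [hi, hmeas i, (hmeas i).compl]
  have disjA : ∀ S T : Finset (Fin M), S ≠ T → Disjoint (A S) (A T) := by
    intro S T hST
    rw [Set.disjoint_left]
    intro ω hS hT
    apply hST
    ext i
    rw [← (memA S ω).1 hS i, (memA T ω).1 hT i]
  -- decomposition of any measurable set
  have key : ∀ B : Set Ω, MeasurableSet B →
      μ B = ∑ S : Finset (Fin M), μ (B ∩ A S) := by
    intro B hB
    rw [← measure_biUnion_finset]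
    · congr 1
      ext ω
      constructor
      · intro hω
        exact Set.mem_iUnion₂.2 ⟨univ.filter (fun i => ω ∈ E i), mem_univ _,
          hω, (memA _ ω).2 (by simp)⟩
      · intro h
        obtain ⟨S, _, hω⟩ := Set.mem_iUnion₂.1 h
        exact hω.1
    · intro S _ T _ hST
      exact Set.disjoint_of_subset Set.inter_subset_right Set.inter_subset_right
        (disjA S T hST)
    · exact fun S _ => hB.inter (measA S)
  have hAfin : ∀ S, μ (A S) ≠ ⊤ := fun S => measure_ne_top μ _
  set x : Finset (Fin M) → ℝ := fun S => (μ (A S)).toReal with hx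
  have hxnn : ∀ S, 0 ≤ x S := fun S => ENNReal.toReal_nonneg
  have hEA : ∀ (i : Fin M) (S : Finset (Fin M)), E i ∩ A S = if i ∈ S then A S else ∅ := by
    intro i S
    by_cases hi : i ∈ S
    · simp only [hi, if_true]
      ext ω
      simp only [Set.mem_inter_iff]
      constructor
      · rintro ⟨_, h⟩; exact h
      · intro h; exact ⟨((memA S ω).1 h i).2 hi, h⟩
    · simp only [hi, if_false]
      ext ω
      simp only [Set.mem_inter_iff, Set.mem_empty_iff_false, iff_false]
      rintro ⟨h1, h2⟩
      exact hi (((memA S ω).1 h2 i).1 h1)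
  -- toReal decompositions
  have toRealSum : ∀ (f : Finset (Fin M) → ENNReal), (∀ S, f S ≠ ⊤) →
      (∑ S, f S).toReal = ∑ S, (f S).toReal := by
    intro f hf
    exact ENNReal.toReal_sum (fun S _ => hf S)
  have hE : ∀ i, (μ (E i)).toReal = ∑ S, (if i ∈ S then x S else 0) := by
    intro i
    rw [key (E i) (hmeas i)]
    rw [toRealSum _ (fun S => measure_ne_top μ _)]
    refine Finset.sum_congr rfl fun S _ => ?_
    rw [hEA i S]
    by_cases hi : i ∈ S <;> simp [hi, hx]
  have hEij : ∀ i j, (μ (E i ∩ E j)).toReal =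
      ∑ S, (if i ∈ S ∧ j ∈ S then x S else 0) := by
    intro i j
    rw [key _ ((hmeas i).inter (hmeas j))]
    rw [toRealSum _ (fun S => measure_ne_top μ _)]
    refine Finset.sum_congr rfl fun S _ => ?_
    rw [Set.inter_assoc, hEA j S]
    by_cases hj : j ∈ S
    · simp only [hj, if_true, and_true]
      rw [hEA i S]
      by_cases hi : i ∈ S <;> simp [hi, hx]
    · simp [hj, hx]
  have hU : (μ (⋃ i, E i)).toReal = ∑ S, (if S.Nonempty then x S else 0) := by
    rw [key _ (MeasurableSet.iUnion (fun i => hmeas i))]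
    rw [toRealSum _ (fun S => measure_ne_top μ _)]
    refine Finset.sum_congr rfl fun S _ => ?_
    by_cases hS : S.Nonempty
    · have heq : (⋃ i, E i) ∩ A S = A S := by
        ext ω
        simp only [Set.mem_inter_iff, Set.mem_iUnion]
        constructor
        · rintro ⟨_, h⟩; exact h
        · intro h
          obtain ⟨i, hi⟩ := hS
          exact ⟨⟨i, ((memA S ω).1 h i).2 hi⟩, h⟩
      rw [heq, if_pos hS]
    · have heq : (⋃ i, E i) ∩ A S = ∅ := by
        rw [Finset.not_nonempty_iff_eq_empty] at hS
        subst hS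
        ext ω
        simp only [Set.mem_inter_iff, Set.mem_iUnion, Set.mem_empty_iff_false, iff_false]
        rintro ⟨⟨i, hi⟩, h2⟩
        exact absurd (((memA ∅ ω).1 h2 i).1 hi) (by simp)
      rw [heq, if_neg hS]
      simp
  -- denominator rewrite
  have hden : ∀ i, (∑ j, (μ (E i ∩ E j)).toReal) =
      ∑ S, (if i ∈ S then (S.card : ℝ) * x S else 0) := by
    intro i
    simp_rw [hEij i]
    rw [Finset.sum_comm]
    refine Finset.sum_congr rfl fun S _ => ?_
    by_cases hi : i ∈ S
    · simp only [hi, true_and, if_true]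
      rw [Finset.sum_ite_mem, Finset.univ_inter, Finset.sum_const, nsmul_eq_mul]
    · simp [hi]
  -- per-index bound
  have perI : ∀ i, ((μ (E i)).toReal) ^ 2 / (∑ j, (μ (E i ∩ E j)).toReal) ≤
      ∑ S, (if i ∈ S then x S / S.card else 0) := by
    intro i
    rw [hE i, hden i]
    set s' : Finset (Finset (Fin M)) := univ.filter (fun S => i ∈ S ∧ 0 < x S) with hs'
    have hnum : ∑ S, (if i ∈ S then x S else 0) = ∑ S ∈ s', x S := by
      rw [← Finset.sum_filter]
      refine (Finset.sum_subset ?_ ?_).symm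
      · intro S hS
        rw [hs', Finset.mem_filter] at hS
        exact Finset.mem_filter.2 ⟨Finset.mem_univ _, hS.2.1⟩
      · intro S hS hnS
        rw [Finset.mem_filter] at hS
        by_contra hne
        apply hnS
        rw [hs', Finset.mem_filter]
        exact ⟨Finset.mem_univ _, hS.2, lt_of_le_of_ne (hxnn S) (Ne.symm hne)⟩
    have hdeneq : ∑ S, (if i ∈ S then (S.card : ℝ) * x S else 0) =
        ∑ S ∈ s', (S.card : ℝ) * x S := by
      rw [← Finset.sum_filter]
      refine (Finset.sum_subset ?_ ?_).symm
      · intro S hS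
        rw [hs', Finset.mem_filter] at hS
        exact Finset.mem_filter.2 ⟨Finset.mem_univ _, hS.2.1⟩
      · intro S hS hnS
        rw [Finset.mem_filter] at hS
        by_contra hne
        have hxne : x S ≠ 0 := fun h => hne (by rw [h, mul_zero])
        apply hnS
        rw [hs', Finset.mem_filter]
        exact ⟨Finset.mem_univ _, hS.2, lt_of_le_of_ne (hxnn S) (Ne.symm hxne)⟩
    rw [hnum, hdeneq]
    have hgpos : ∀ S ∈ s', (0:ℝ) < (S.card : ℝ) * x S := by
      intro S hS
      rw [hs', Finset.mem_filter] at hS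
      have hc : 0 < S.card := Finset.card_pos.2 ⟨i, hS.2.1⟩
      exact mul_pos (by exact_mod_cast hc) hS.2.2
    calc (∑ S ∈ s', x S) ^ 2 / (∑ S ∈ s', (S.card : ℝ) * x S)
        ≤ ∑ S ∈ s', (x S) ^ 2 / ((S.card : ℝ) * x S) :=
          Finset.sq_sum_div_le_sum_sq_div s' x hgpos
      _ = ∑ S ∈ s', x S / S.card := by
          refine Finset.sum_congr rfl fun S hS => ?_
          rw [hs', Finset.mem_filter] at hS
          rw [sq]
          rw [mul_comm (S.card : ℝ) (x S)]
          rw [div_mul_eq_div_div]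
          rw [mul_div_assoc, div_self (ne_of_gt hS.2.2), mul_one]
      _ ≤ ∑ S, (if i ∈ S then x S / S.card else 0) := by
          rw [← Finset.sum_filter]
          refine Finset.sum_le_sum_of_subset_of_nonneg ?_ ?_
          · intro S hS
            rw [hs', Finset.mem_filter] at hS
            exact Finset.mem_filter.2 ⟨Finset.mem_univ _, hS.2.1⟩
          · intro S _ _
            exact div_nonneg (hxnn S) (Nat.cast_nonneg _)
  -- summing up
  have exch : ∑ i, ∑ S, (if i ∈ S then x S / S.card else 0) =
      ∑ S, (if S.Nonempty then x S else 0) := by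
    rw [Finset.sum_comm]
    refine Finset.sum_congr rfl fun S _ => ?_
    rw [Finset.sum_ite_mem, Finset.univ_inter, Finset.sum_const, nsmul_eq_mul]
    by_cases hS : S.Nonempty
    · have hc : (S.card : ℝ) ≠ 0 := by exact_mod_cast (Finset.card_pos.2 hS).ne'
      rw [if_pos hS]
      field_simp
    · rw [Finset.not_nonempty_iff_eq_empty] at hS
      simp [hS]
  rw [ge_iff_le, hU, ← exch]
  exact Finset.sum_le_sum fun i _ => perI i
end

section
/- If M events E₁,…,E_M satisfy P(E_i ∩ E_j) ≤ C·P(E_i)·P(E_j) for all i ≠ j (with C ≥ 1), and P(E_i) = p > 0 for all i, then P(⋃_i E_i) ≥ M·p / (1 + C·(M−1)·p) ≥ (1/(2C))·min{1, M·p}. -/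
open MeasureTheory Set ENNReal

theorem stmt11 {Ω : Type*} [MeasurableSpace Ω] (μ : MeasureTheory.Measure Ω)
    [MeasureTheory.IsProbabilityMeasure μ] (M : ℕ) (hM : 1 ≤ M)
    (E : Fin M → Set Ω) (hmeas : ∀ i, MeasurableSet (E i))
    (p C : ℝ) (hp : 0 < p) (hC : 1 ≤ C)
    (hE : ∀ i, (μ (E i)).toReal = p)
    (hpair : ∀ i j, i ≠ j → (μ (E i ∩ E j)).toReal ≤ C * p * p) :
    (μ (⋃ i, E i)).toReal ≥ (M : ℝ) * p / (1 + C * ((M : ℝ) - 1) * p) ∧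
      (M : ℝ) * p / (1 + C * ((M : ℝ) - 1) * p) ≥ (1 / (2 * C)) * min 1 ((M : ℝ) * p) := by
  classical
  have hM1 : (1:ℝ) ≤ (M:ℝ) := by exact_mod_cast hM
  have hC0 : (0:ℝ) < C := lt_of_lt_of_le one_pos hC
  have hdenom : (0:ℝ) < 1 + C * ((M : ℝ) - 1) * p := by
    have : (0:ℝ) ≤ C * ((M:ℝ) - 1) * p :=
      mul_nonneg (mul_nonneg hC0.le (by linarith)) hp.le
    linarith
  set U : Set Ω := ⋃ i, E i with hU
  have hmU : MeasurableSet U := MeasurableSet.iUnion hmeas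
  set f : Ω → ℝ≥0∞ := fun ω => ∑ i : Fin M, (E i).indicator 1 ω with hf
  have hmf : Measurable f :=
    Finset.measurable_sum _ fun i _ => measurable_one.indicator (hmeas i)
  -- first moment
  have hA : ∫⁻ ω, f ω ∂μ = ∑ i : Fin M, μ (E i) := by
    rw [hf, lintegral_finset_sum _ fun i _ => measurable_one.indicator (hmeas i)]
    exact Finset.sum_congr rfl fun i _ => lintegral_indicator_one (hmeas i)
  have hAreal : (∫⁻ ω, f ω ∂μ).toReal = (M:ℝ) * p := by
    rw [hA, ENNReal.toReal_sum (fun i _ => measure_ne_top μ _)]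
    simp [hE, Finset.sum_const, mul_comm]
  -- second moment
  have hsq' : ∀ ω, f ω ^ (2:ℝ) = ∑ i : Fin M, ∑ j : Fin M, (E i ∩ E j).indicator 1 ω := by
    intro ω
    have h2 : ((2:ℕ):ℝ) = (2:ℝ) := by norm_num
    rw [← h2, ENNReal.rpow_natCast, sq, hf, Finset.sum_mul_sum]
    refine Finset.sum_congr rfl fun i _ => Finset.sum_congr rfl fun j _ => ?_
    rw [Set.inter_indicator_one]; rfl
  have hB : ∫⁻ ω, f ω ^ (2:ℝ) ∂μ = ∑ i : Fin M, ∑ j : Fin M, μ (E i ∩ E j) := by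
    simp_rw [hsq']
    rw [lintegral_finset_sum _ fun i _ =>
      Finset.measurable_sum _ fun j _ => measurable_one.indicator ((hmeas i).inter (hmeas j))]
    refine Finset.sum_congr rfl fun i _ => ?_
    rw [lintegral_finset_sum _ fun j _ => measurable_one.indicator ((hmeas i).inter (hmeas j))]
    exact Finset.sum_congr rfl fun j _ => lintegral_indicator_one ((hmeas i).inter (hmeas j))
  have hBne : ∫⁻ ω, f ω ^ (2:ℝ) ∂μ ≠ ⊤ := by
    rw [hB]
    exact (ENNReal.sum_lt_top.2 fun i _ =>
      ENNReal.sum_lt_top.2 fun j _ => (measure_lt_top μ _)).ne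
  have hBreal : (∫⁻ ω, f ω ^ (2:ℝ) ∂μ).toReal
      ≤ (M:ℝ) * p * (1 + C * ((M : ℝ) - 1) * p) := by
    rw [hB, ENNReal.toReal_sum (fun i _ => by
      exact (ENNReal.sum_lt_top.2 fun j _ => measure_lt_top μ _).ne)]
    have hrow : ∀ i : Fin M, (∑ j : Fin M, μ (E i ∩ E j)).toReal
        ≤ p + ((M:ℝ) - 1) * (C * p * p) := by
      intro i
      rw [ENNReal.toReal_sum (fun j _ => measure_ne_top μ _)]
      have hbd : ∑ j : Fin M, (μ (E i ∩ E j)).toReal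
          ≤ ∑ j : Fin M, (if j = i then p else C * p * p) := by
        refine Finset.sum_le_sum fun j _ => ?_
        by_cases h : j = i
        · subst h; rw [if_pos rfl, Set.inter_self]; exact le_of_eq (hE j)
        · rw [if_neg h]; exact hpair i j fun he => h he.symm
      refine hbd.trans (le_of_eq ?_)
      have : ∀ j : Fin M, (if j = i then p else C * p * p)
          = C * p * p + (if j = i then p - C * p * p else 0) := by
        intro j; by_cases h : j = i <;> simp [h]
      simp_rw [this]
      rw [Finset.sum_add_distrib, Finset.sum_const, Finset.card_univ, Fintype.card_fin,
        Finset.sum_ite_eq' Finset.univ i (fun _ => p - C * p * p),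
        if_pos (Finset.mem_univ i), nsmul_eq_mul]
      ring
    calc ∑ i : Fin M, (∑ j : Fin M, μ (E i ∩ E j)).toReal
        ≤ ∑ i : Fin M, (p + ((M:ℝ) - 1) * (C * p * p)) := Finset.sum_le_sum fun i _ => hrow i
      _ = (M:ℝ) * p * (1 + C * ((M : ℝ) - 1) * p) := by
          rw [Finset.sum_const, Finset.card_univ, Fintype.card_fin, nsmul_eq_mul]; ring
  -- Cauchy-Schwarz
  set g : Ω → ℝ≥0∞ := U.indicator (fun _ => (1:ℝ≥0∞)) with hg
  have hmg : Measurable g := measurable_const.indicator hmU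
  have hfU : ∀ ω, f ω = (f * g) ω := by
    intro ω
    by_cases h : ω ∈ U
    · simp [hg, Set.indicator_of_mem h]
    · have hz : f ω = 0 := by
        rw [hf]
        exact Finset.sum_eq_zero fun i _ =>
          Set.indicator_of_notMem (fun hi => h (Set.mem_iUnion.2 ⟨i, hi⟩)) _
      simp [hz]
  have hconj : Real.HolderConjugate 2 2 := Real.HolderConjugate.two_two
  have hCS : ∫⁻ ω, f ω ∂μ
      ≤ (∫⁻ ω, f ω ^ (2:ℝ) ∂μ) ^ (1/2:ℝ) * (μ U) ^ (1/2:ℝ) := by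
    have h1 : ∫⁻ ω, f ω ∂μ = ∫⁻ ω, (f * g) ω ∂μ := lintegral_congr fun ω => hfU ω
    have h2 : ∫⁻ ω, g ω ^ (2:ℝ) ∂μ = μ U := by
      have he : ∀ ω, g ω ^ (2:ℝ) = U.indicator 1 ω := by
        intro ω
        by_cases h : ω ∈ U <;>
          simp [hg, Set.indicator_of_mem, Set.indicator_of_notMem, h,
            ENNReal.one_rpow, ENNReal.zero_rpow_of_pos]
      simp_rw [he]
      exact lintegral_indicator_one hmU
    calc ∫⁻ ω, f ω ∂μ = ∫⁻ ω, (f * g) ω ∂μ := h1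
      _ ≤ (∫⁻ ω, f ω ^ (2:ℝ) ∂μ) ^ (1/2:ℝ) * (∫⁻ ω, g ω ^ (2:ℝ) ∂μ) ^ (1/2:ℝ) :=
        ENNReal.lintegral_mul_le_Lp_mul_Lq μ hconj hmf.aemeasurable hmg.aemeasurable
      _ = (∫⁻ ω, f ω ^ (2:ℝ) ∂μ) ^ (1/2:ℝ) * (μ U) ^ (1/2:ℝ) := by rw [h2]
  -- convert to reals
  have hMp : (0:ℝ) < (M:ℝ) * p := mul_pos (lt_of_lt_of_le one_pos hM1) hp
  set b : ℝ := (∫⁻ ω, f ω ^ (2:ℝ) ∂μ).toReal with hb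
  set u : ℝ := (μ U).toReal with hu
  have hb0 : 0 ≤ b := ENNReal.toReal_nonneg
  have hu0 : 0 ≤ u := ENNReal.toReal_nonneg
  have hCSr : (M:ℝ) * p ≤ Real.sqrt b * Real.sqrt u := by
    have hne : (∫⁻ ω, f ω ^ (2:ℝ) ∂μ) ^ (1/2:ℝ) * (μ U) ^ (1/2:ℝ) ≠ ⊤ :=
      ENNReal.mul_ne_top (ENNReal.rpow_ne_top_of_nonneg (by norm_num) hBne)
        (ENNReal.rpow_ne_top_of_nonneg (by norm_num) (measure_ne_top μ U))
    have h := ENNReal.toReal_mono hne hCS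
    rw [hAreal, ENNReal.toReal_mul, ← ENNReal.toReal_rpow, ← ENNReal.toReal_rpow] at h
    rw [Real.sqrt_eq_rpow, Real.sqrt_eq_rpow]
    exact h
  have hkey : ((M:ℝ) * p) ^ 2 ≤ b * u := by
    have hsq := mul_self_le_mul_self hMp.le hCSr
    nlinarith [hsq, Real.mul_self_sqrt hb0, Real.mul_self_sqrt hu0,
      Real.sqrt_nonneg b, Real.sqrt_nonneg u]
  have hMp : (0:ℝ) < (M:ℝ) * p := mul_pos (lt_of_lt_of_le one_pos hM1) hp
  constructor
  · rw [ge_iff_le, div_le_iff₀ hdenom]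
    nlinarith [hkey, hBreal, hMp, hu0, mul_le_mul_of_nonneg_right hBreal hu0]
  · rcases le_total ((M:ℝ) * p) 1 with h | h
    · rw [min_eq_right h]
      have heq : (1 / (2 * C)) * ((M:ℝ) * p) = ((M:ℝ) * p) / (2 * C) := by ring
      rw [ge_iff_le, heq]
      apply div_le_div_of_nonneg_left (le_of_lt hMp) hdenom
      nlinarith
    · rw [min_eq_left h]
      rw [ge_iff_le, mul_one, div_le_div_iff₀ (by positivity) hdenom]
      nlinarith
end

section
/- Upper bound on pairwise marginal of a recursively constrained product measure: let T be a finite set, d : T × T → ℝ symmetric, Δ ∈ ℝ, and suppose random variables X₁,…,X_M are generated recursively with X_i uniform on T(X₁,…,X_{i−1}) := {x ∈ T : d(x, X_j) > Δ, ∀ j < i}, where each such set has cardinality at least (1−ε)|T| almost surely for some ε ∈ (0,1). Then for any k < m and any x_k, x_m ∈ T, P(X_k = x_k, X_m = x_m) ≤ 1/((1−ε)²|T|²), and P(X_k = x_k, X_m = x_m) = 0 whenever d(x_k, x_m) ≤ Δ. -/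
open scoped Classical

open Finset

private lemma chain_sum_le_one {α : Type*} [Fintype α] {M : ℕ}
    (q : Fin M → (Fin M → α) → ℝ)
    (h0 : ∀ i x, 0 ≤ q i x)
    (hdep : ∀ (i : Fin M) (x x' : Fin M → α), (∀ j, j ≤ i → x j = x' j) → q i x = q i x')
    (hsum : ∀ (i : Fin M) (x : Fin M → α), (∑ a : α, q i (Function.update x i a)) ≤ 1)
    (s : Finset (Fin M)) (v : Fin M → α) :
    (∑ x ∈ Finset.univ.filter (fun x : Fin M → α => ∀ j, j ∉ s → x j = v j),
      ∏ i ∈ s, q i x) ≤ 1 := by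
  induction s using Finset.strongInduction generalizing v with
  | _ s ih =>
    rcases s.eq_empty_or_nonempty with rfl | hs
    · have hfe : (Finset.univ.filter
          (fun x : Fin M → α => ∀ j, j ∉ (∅ : Finset (Fin M)) → x j = v j)) = {v} := by
        ext x; simp [funext_iff]
      rw [hfe]; simp
    · set i₀ := s.max' hs with hi₀
      have hi₀s : i₀ ∈ s := s.max'_mem hs
      set s' := s.erase i₀ with hs'
      have hsub : s' ⊂ s := Finset.erase_ssubset hi₀s
      have hi₀s' : i₀ ∉ s' := Finset.notMem_erase _ _
      have key : (∑ x ∈ Finset.univ.filter (fun x : Fin M → α => ∀ j, j ∉ s → x j = v j),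
            ∏ i ∈ s, q i x)
          = ∑ p ∈ (Finset.univ.filter
              (fun x : Fin M → α => ∀ j, j ∉ s' → x j = v j)) ×ˢ (Finset.univ : Finset α),
              ∏ i ∈ s, q i (Function.update p.1 i₀ p.2) := by
        apply Finset.sum_nbij' (i := fun x => (Function.update x i₀ (v i₀), x i₀))
          (j := fun p => Function.update p.1 i₀ p.2)
        · intro x hx
          simp only [Finset.mem_filter, Finset.mem_univ, true_and] at hx
          refine Finset.mem_product.2 ⟨?_, Finset.mem_univ _⟩
          simp only [Finset.mem_filter, Finset.mem_univ, true_and]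
          intro j hj
          by_cases hji : j = i₀
          · subst hji; simp
          · rw [Function.update_of_ne hji]
            exact hx j (fun hjs => hj (Finset.mem_erase.2 ⟨hji, hjs⟩))
        · intro p hp
          rw [Finset.mem_product] at hp
          simp only [Finset.mem_filter, Finset.mem_univ, true_and] at hp ⊢
          intro j hj
          have hji : j ≠ i₀ := fun h => hj (h ▸ hi₀s)
          rw [Function.update_of_ne hji]
          exact hp.1 j (fun hjs => hj (Finset.mem_of_mem_erase hjs))
        · intro x hx
          simp only [Function.update_idem]
          rw [Function.update_eq_self]
        · rintro ⟨p1, p2⟩ hp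
          rw [Finset.mem_product] at hp
          simp only [Finset.mem_filter, Finset.mem_univ, true_and] at hp
          have hp1 : p1 i₀ = v i₀ := hp.1 i₀ hi₀s'
          simp only [Function.update_idem, Function.update_self, ← hp1,
            Function.update_eq_self, Prod.mk.injEq, and_true]
        · intro x hx
          rw [Function.update_idem, Function.update_eq_self]
      rw [key, Finset.sum_product]
      calc (∑ x' ∈ Finset.univ.filter (fun x : Fin M → α => ∀ j, j ∉ s' → x j = v j),
              ∑ a : α, ∏ i ∈ s, q i (Function.update x' i₀ a))
          ≤ ∑ x' ∈ Finset.univ.filter (fun x : Fin M → α => ∀ j, j ∉ s' → x j = v j),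
              ∏ i ∈ s', q i x' := by
            refine Finset.sum_le_sum fun x' _ => ?_
            have hprod : ∀ a : α, ∏ i ∈ s, q i (Function.update x' i₀ a)
                = q i₀ (Function.update x' i₀ a) * ∏ i ∈ s', q i x' := by
              intro a
              rw [← Finset.mul_prod_erase s _ hi₀s]
              congr 1
              refine Finset.prod_congr rfl fun i hi => ?_
              have hine : i ≠ i₀ := Finset.ne_of_mem_erase hi
              have hilt : i < i₀ := lt_of_le_of_ne (s.le_max' i (Finset.mem_of_mem_erase hi)) hine
              apply hdep
              intro j hj
              exact Function.update_of_ne (fun h => absurd (h ▸ hj) (not_le.2 hilt)) _ _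
            simp only [hprod]
            rw [← Finset.sum_mul]
            calc (∑ a : α, q i₀ (Function.update x' i₀ a)) * ∏ i ∈ s', q i x'
                ≤ 1 * ∏ i ∈ s', q i x' := by
                  apply mul_le_mul_of_nonneg_right (hsum i₀ x')
                  exact Finset.prod_nonneg fun i _ => h0 i x'
              _ = ∏ i ∈ s', q i x' := one_mul _
        _ ≤ 1 := ih s' hsub v

theorem stmt13 {α : Type*} [Fintype α] (T : Finset α) (hT : T.Nonempty)
    (d : α → α → ℝ) (hsym : ∀ x y, d x y = d y x) (Δ : ℝ)
    (ε : ℝ) (hε0 : 0 < ε) (hε1 : ε < 1) (M : ℕ)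
    (hcard : ∀ (i : Fin M) (x : Fin M → α),
      (∀ j : Fin M, j < i → x j ∈ T) →
      (∀ j k : Fin M, k < j → j < i → d (x j) (x k) > Δ) →
      (1 - ε) * T.card ≤ ((T.filter fun y => ∀ j : Fin M, j < i → d y (x j) > Δ).card : ℝ))
    (k m : Fin M) (hkm : k < m) (xk xm : α) :
    (∑ x ∈ Finset.univ.filter (fun x : Fin M → α => x k = xk ∧ x m = xm),
        ∏ i, (if x i ∈ T.filter (fun y => ∀ j : Fin M, j < i → d y (x j) > Δ)
              then (1 : ℝ) / (T.filter fun y => ∀ j : Fin M, j < i → d y (x j) > Δ).card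
              else 0))
      ≤ 1 / ((1 - ε) ^ 2 * (T.card : ℝ) ^ 2) ∧
    (d xk xm ≤ Δ →
      (∑ x ∈ Finset.univ.filter (fun x : Fin M → α => x k = xk ∧ x m = xm),
        ∏ i, (if x i ∈ T.filter (fun y => ∀ j : Fin M, j < i → d y (x j) > Δ)
              then (1 : ℝ) / (T.filter fun y => ∀ j : Fin M, j < i → d y (x j) > Δ).card
              else 0)) = 0) := by
  have hkm' : k ≠ m := ne_of_lt hkm
  set S : Fin M → (Fin M → α) → Finset α :=
    fun i x => T.filter (fun y => ∀ j : Fin M, j < i → d y (x j) > Δ) with hS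
  set p : Fin M → (Fin M → α) → ℝ :=
    fun i x => if x i ∈ S i x then (1 : ℝ) / ((S i x).card : ℝ) else 0 with hp
  have hp0 : ∀ i x, 0 ≤ p i x := by
    intro i x
    simp only [hp]
    split
    · exact div_nonneg zero_le_one (Nat.cast_nonneg _)
    · exact le_refl 0
  have hmain : ∀ (x : Fin M → α),
      (∏ i, (if x i ∈ T.filter (fun y => ∀ j : Fin M, j < i → d y (x j) > Δ)
              then (1 : ℝ) / (T.filter fun y => ∀ j : Fin M, j < i → d y (x j) > Δ).card
              else 0)) = ∏ i, p i x := fun x => rfl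
  have hT0 : (0 : ℝ) < T.card := by
    exact_mod_cast Finset.card_pos.2 hT
  have hc0 : (0 : ℝ) < (1 - ε) * T.card := mul_pos (by linarith) hT0
  set c : ℝ := 1 / ((1 - ε) * T.card) with hc
  have hcpos : 0 < c := div_pos one_pos hc0
  constructor
  · -- upper bound
    simp only [hmain]
    have hpoint : ∀ x ∈ Finset.univ.filter (fun x : Fin M → α => x k = xk ∧ x m = xm),
        (∏ i, p i x) ≤ c * c * ∏ i ∈ (Finset.univ \ {k, m} : Finset (Fin M)), p i x := by
      intro x _
      have hD : 0 ≤ ∏ i ∈ (Finset.univ \ {k, m} : Finset (Fin M)), p i x :=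
        Finset.prod_nonneg fun i _ => hp0 i x
      by_cases hz : ∀ i, p i x ≠ 0
      · have hmem : ∀ i, x i ∈ S i x := by
          intro i
          by_contra h
          exact hz i (by simp [hp, h])
        have hval : ∀ i, p i x = 1 / ((S i x).card : ℝ) := by
          intro i; simp [hp, hmem i]
        have hbound : ∀ i, p i x ≤ c := by
          intro i
          have h1 : ∀ j : Fin M, j < i → x j ∈ T := fun j hj =>
            (Finset.mem_filter.1 (hmem j)).1
          have h2 : ∀ j j' : Fin M, j' < j → j < i → d (x j) (x j') > Δ := fun j j' hj' _ =>
            (Finset.mem_filter.1 (hmem j)).2 j' hj'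
          have hcd := hcard i x h1 h2
          rw [hval i, hc]
          exact one_div_le_one_div_of_le hc0 hcd
        have hsplit : (∏ i, p i x)
            = (∏ i ∈ (Finset.univ \ {k, m} : Finset (Fin M)), p i x) * (p k x * p m x) := by
          rw [← Finset.prod_sdiff (Finset.subset_univ ({k, m} : Finset (Fin M)))]
          congr 1
          rw [Finset.prod_pair hkm']
        rw [hsplit]
        calc (∏ i ∈ (Finset.univ \ {k, m} : Finset (Fin M)), p i x) * (p k x * p m x)
            ≤ (∏ i ∈ (Finset.univ \ {k, m} : Finset (Fin M)), p i x) * (c * c) := by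
              apply mul_le_mul_of_nonneg_left _ hD
              exact mul_le_mul (hbound k) (hbound m) (hp0 m x) hcpos.le
          _ = c * c * ∏ i ∈ (Finset.univ \ {k, m} : Finset (Fin M)), p i x := mul_comm _ _
      · push_neg at hz
        obtain ⟨i, hi⟩ := hz
        rw [Finset.prod_eq_zero (Finset.mem_univ i) hi]
        exact mul_nonneg (mul_nonneg hcpos.le hcpos.le) hD
    have hdep : ∀ (i : Fin M) (x x' : Fin M → α), (∀ j, j ≤ i → x j = x' j) → p i x = p i x' := by
      intro i x x' h
      have hSe : S i x = S i x' := by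
        simp only [hS]
        apply Finset.filter_congr
        intro y _
        constructor
        · intro hy j hj; rw [← h j (le_of_lt hj)]; exact hy j hj
        · intro hy j hj; rw [h j (le_of_lt hj)]; exact hy j hj
      simp only [hp, hSe, h i le_rfl]
    have hsum1 : ∀ (i : Fin M) (x : Fin M → α), (∑ a : α, p i (Function.update x i a)) ≤ 1 := by
      intro i x
      have hpe : ∀ a : α, p i (Function.update x i a)
          = if a ∈ S i x then (1 : ℝ) / ((S i x).card : ℝ) else 0 := by
        intro a
        have hSe : S i (Function.update x i a) = S i x := by
          simp only [hS]
          apply Finset.filter_congr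
          intro y _
          constructor
          · intro hy j hj
            have := hy j hj
            rwa [Function.update_of_ne (ne_of_lt hj)] at this
          · intro hy j hj
            rw [Function.update_of_ne (ne_of_lt hj)]
            exact hy j hj
        simp only [hp, hSe, Function.update_self]
      simp only [hpe]
      rw [Finset.sum_ite_mem, Finset.univ_inter, Finset.sum_const, nsmul_eq_mul]
      rcases Nat.eq_zero_or_pos (S i x).card with h | h
      · simp [h]
      · have hne : ((S i x).card : ℝ) ≠ 0 := Nat.cast_ne_zero.2 h.ne'
        rw [mul_one_div, div_self hne]
    set v : Fin M → α := fun j => if j = m then xm else xk with hv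
    have hvk : v k = xk := by simp [hv, hkm']
    have hvm : v m = xm := by simp [hv]
    have hnot : ∀ j : Fin M,
        j ∉ ((Finset.univ : Finset (Fin M)) \ ({k, m} : Finset (Fin M))) ↔ (j = k ∨ j = m) := by
      intro j; simp only [Finset.mem_sdiff, Finset.mem_univ, true_and,
        Finset.mem_insert, Finset.mem_singleton, not_not, not_and]
    have hFeq : Finset.univ.filter (fun x : Fin M → α => x k = xk ∧ x m = xm)
        = Finset.univ.filter (fun x : Fin M → α =>
            ∀ j, j ∉ ((Finset.univ : Finset (Fin M)) \ ({k, m} : Finset (Fin M))) → x j = v j) := by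
      ext x
      simp only [Finset.mem_filter, Finset.mem_univ, true_and]
      constructor
      · rintro ⟨h1, h2⟩ j hj
        rcases (hnot j).1 hj with rfl | rfl
        · rw [h1, hvk]
        · rw [h2, hvm]
      · intro h
        exact ⟨(h k ((hnot k).2 (Or.inl rfl))).trans hvk,
          (h m ((hnot m).2 (Or.inr rfl))).trans hvm⟩
    calc (∑ x ∈ Finset.univ.filter (fun x : Fin M → α => x k = xk ∧ x m = xm), ∏ i, p i x)
        ≤ ∑ x ∈ Finset.univ.filter (fun x : Fin M → α => x k = xk ∧ x m = xm),
            c * c * ∏ i ∈ (Finset.univ \ {k, m} : Finset (Fin M)), p i x :=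
          Finset.sum_le_sum hpoint
      _ = c * c * ∑ x ∈ Finset.univ.filter (fun x : Fin M → α => x k = xk ∧ x m = xm),
            ∏ i ∈ (Finset.univ \ {k, m} : Finset (Fin M)), p i x := (Finset.mul_sum _ _ _).symm
      _ ≤ c * c * 1 := by
          apply mul_le_mul_of_nonneg_left _ (mul_nonneg hcpos.le hcpos.le)
          rw [hFeq]
          exact chain_sum_le_one p hp0 hdep hsum1 _ v
      _ = c * c := mul_one _
      _ = 1 / ((1 - ε) ^ 2 * (T.card : ℝ) ^ 2) := by
          rw [hc, div_mul_div_comm, one_mul]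
          congr 1
          ring
  · -- zero
    intro hd
    apply Finset.sum_eq_zero
    intro x hx
    rw [Finset.mem_filter] at hx
    obtain ⟨-, hxk, hxm⟩ := hx
    apply Finset.prod_eq_zero (Finset.mem_univ m)
    rw [if_neg]
    intro hmem
    rw [Finset.mem_filter] at hmem
    have := hmem.2 k hkm
    rw [hxm, hxk, hsym] at this
    linarith
end

section
/- Upper bound on triple marginals: under the same recursive construction (X_i uniform on the set of points of T at distance > Δ from all previous points, each such set having size ≥ (1−ε)|T|), for any i < j < k and any x_i, x_j, x_k ∈ T with all three pairwise distances exceeding Δ, P(X_i = x_i, X_j = x_j, X_k = x_k) ≤ 1/((1−ε)³|T|³). -/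
open scoped Classical

open Finset

private lemma snoc_eq_of_lt_last {α : Type*} {N : ℕ} (y : Fin N → α) (a b : α)
    {l : Fin (N + 1)} (hl : l < Fin.last N) :
    (Fin.snoc y a : Fin (N + 1) → α) l = (Fin.snoc y b : Fin (N + 1) → α) l := by
  obtain ⟨l', rfl⟩ := Fin.exists_castSucc_eq.mpr (Fin.ne_last_of_lt hl)
  simp [Fin.snoc_castSucc]

private lemma aux_rgv {α : Type*} [Fintype α] [Nonempty α] (N : ℕ) :
    ∀ (w : Fin N → (Fin N → α) → ℝ),
      (∀ l (x y : Fin N → α), (∀ r, r ≤ l → x r = y r) → w l x = w l y) →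
      (∀ l x, 0 ≤ w l x) →
      (∀ l (x : Fin N → α), ∑ a : α, w l (Function.update x l a) ≤ 1) →
      ∀ (F : Finset (Fin N)) (v : Fin N → α) (c : Fin N → ℝ),
      (∀ l ∈ F, 0 ≤ c l) →
      (∀ l ∈ F, ∀ x : Fin N → α, (∀ r, r < l → w r x ≠ 0) → w l x ≤ c l) →
      ∑ x ∈ univ.filter (fun x : Fin N → α => ∀ l ∈ F, x l = v l), ∏ l, w l x
        ≤ ∏ l ∈ F, c l := by
  induction N with
  | zero =>
      intro w _ _ _ F v c _ _
      have hF : F = ∅ := Finset.eq_empty_of_isEmpty F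
      subst hF
      simp
  | succ N ih =>
      intro w hdep hnn hsum F v c hc0 hbound
      have arb : α := Classical.arbitrary α
      set la : Fin (N + 1) := Fin.last N with hla_def
      set w' : Fin N → (Fin N → α) → ℝ :=
        fun l y => w l.castSucc (Fin.snoc y arb) with hw'
      have hsnoc : ∀ (l : Fin N) (y : Fin N → α) (a : α),
          w l.castSucc (Fin.snoc y a) = w' l y := by
        intro l y a
        apply hdep
        intro r hr
        exact snoc_eq_of_lt_last y a arb (lt_of_le_of_lt hr (Fin.castSucc_lt_last l))
      set F' : Finset (Fin N) := univ.filter (fun l => l.castSucc ∈ F) with hF'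
      set v' : Fin N → α := fun l => v l.castSucc with hv'
      set c' : Fin N → ℝ := fun l => c l.castSucc with hc'
      have hdep' : ∀ l (x y : Fin N → α), (∀ r, r ≤ l → x r = y r) → w' l x = w' l y := by
        intro l x y h
        apply hdep
        intro r hr
        have hrne : r ≠ la := ne_of_lt (lt_of_le_of_lt hr (Fin.castSucc_lt_last l))
        obtain ⟨r', rfl⟩ := Fin.exists_castSucc_eq.mpr hrne
        simp only [Fin.snoc_castSucc]
        exact h r' (Fin.castSucc_le_castSucc_iff.mp hr)
      have hnn' : ∀ l x, 0 ≤ w' l x := fun l x => hnn _ _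
      have hsum' : ∀ l (x : Fin N → α), ∑ a : α, w' l (Function.update x l a) ≤ 1 := by
        intro l x
        calc ∑ a : α, w' l (Function.update x l a)
            = ∑ a : α, w l.castSucc (Function.update (Fin.snoc x arb) l.castSucc a) := by
              refine Finset.sum_congr rfl fun a _ => ?_
              simp only [hw', Fin.snoc_update]
          _ ≤ 1 := hsum _ _
      have hc0' : ∀ l ∈ F', 0 ≤ c' l := fun l hl =>
        hc0 l.castSucc (Finset.mem_filter.mp hl).2
      have hbound' : ∀ l ∈ F', ∀ x : Fin N → α,
          (∀ r, r < l → w' r x ≠ 0) → w' l x ≤ c' l := by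
        intro l hl x hx
        refine hbound l.castSucc (Finset.mem_filter.mp hl).2 (Fin.snoc x arb) ?_
        intro r hr
        have hrne : r ≠ la := ne_of_lt (lt_of_lt_of_le hr (le_of_lt (Fin.castSucc_lt_last l)))
        obtain ⟨r', rfl⟩ := Fin.exists_castSucc_eq.mpr hrne
        rw [hsnoc]
        exact hx r' (Fin.castSucc_lt_castSucc_iff.mp hr)
      have ihW := ih w' hdep' hnn' hsum' F' v' c' hc0' hbound'
      have himg : F'.image Fin.castSucc = F.erase la := by
        ext m
        simp only [Finset.mem_image, Finset.mem_erase, hF', Finset.mem_filter,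
          Finset.mem_univ, true_and]
        constructor
        · rintro ⟨l, hl, rfl⟩
          exact ⟨ne_of_lt (Fin.castSucc_lt_last l), hl⟩
        · rintro ⟨hm, hmF⟩
          obtain ⟨l, rfl⟩ := Fin.exists_castSucc_eq.mpr hm
          exact ⟨l, hmF, rfl⟩
      have hprodF' : ∏ l ∈ F', c' l = ∏ m ∈ F.erase la, c m := by
        rw [← himg, Finset.prod_image (fun a _ b _ h => Fin.castSucc_injective N h)]
      have hP : ∀ (y : Fin N → α) (a : α),
          (∀ l ∈ F, (Fin.snoc y a : Fin (N + 1) → α) l = v l) ↔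
            ((∀ l ∈ F', y l = v' l) ∧ (la ∈ F → a = v la)) := by
        intro y a
        constructor
        · intro h
          refine ⟨fun l hl => ?_, fun hla => ?_⟩
          · have := h l.castSucc (Finset.mem_filter.mp hl).2
            simpa [Fin.snoc_castSucc, hv'] using this
          · have := h la hla
            simpa [hla_def] using this
        · rintro ⟨h1, h2⟩ l hl
          rcases eq_or_ne l la with rfl | hne
          · simpa [hla_def] using h2 hl
          · obtain ⟨l', rfl⟩ := Fin.exists_castSucc_eq.mpr hne
            have hl' : l' ∈ F' := Finset.mem_filter.mpr ⟨Finset.mem_univ _, hl⟩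
            simpa [Fin.snoc_castSucc, hv'] using h1 l' hl'
      have hprodsplit : ∀ (y : Fin N → α) (a : α),
          ∏ l, w l (Fin.snoc y a) = (∏ l, w' l y) * w la (Fin.snoc y a) := by
        intro y a
        rw [Fin.prod_univ_castSucc]
        congr 1
        exact Finset.prod_congr rfl fun l _ => hsnoc l y a
      have hsum_eq :
          ∑ x ∈ univ.filter (fun x : Fin (N + 1) → α => ∀ l ∈ F, x l = v l), ∏ l, w l x
          = ∑ y : Fin N → α, ∑ a : α,
              (if ∀ l ∈ F, (Fin.snoc y a : Fin (N + 1) → α) l = v l then ∏ l, w l (Fin.snoc y a) else 0) := by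
        rw [Finset.sum_filter]
        let e : (Fin N → α) × α ≃ (Fin (N + 1) → α) :=
          { toFun := fun p => Fin.snoc p.1 p.2
            invFun := fun x => (Fin.init x, x (Fin.last N))
            left_inv := fun p => by simp
            right_inv := fun x => by simp }
        rw [← Equiv.sum_comp e
          (fun x => if ∀ l ∈ F, x l = v l then ∏ l, w l x else 0), Fintype.sum_prod_type]
        rfl
      rw [hsum_eq]
      have hWnn : ∀ y : Fin N → α, 0 ≤ ∏ l, w' l y :=
        fun y => Finset.prod_nonneg fun l _ => hnn' _ _
      by_cases hlaF : la ∈ F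
      · -- last coordinate is constrained
        have key : ∀ y : Fin N → α,
            (∑ a : α, if ∀ l ∈ F, (Fin.snoc y a : Fin (N + 1) → α) l = v l then ∏ l, w l (Fin.snoc y a) else 0)
              ≤ (if ∀ l ∈ F', y l = v' l then c la * ∏ l, w' l y else 0) := by
          intro y
          have hterm : ∀ a : α,
              (if ∀ l ∈ F, (Fin.snoc y a : Fin (N + 1) → α) l = v l then ∏ l, w l (Fin.snoc y a) else 0)
              ≤ (if a = v la then
                  (if ∀ l ∈ F', y l = v' l then c la * ∏ l, w' l y else 0) else 0) := by
            intro a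
            by_cases hPa : ∀ l ∈ F, (Fin.snoc y a : Fin (N + 1) → α) l = v l
            · obtain ⟨h1, h2⟩ := (hP y a).mp hPa
              have ha : a = v la := h2 hlaF
              rw [if_pos hPa, if_pos ha, if_pos h1, hprodsplit]
              by_cases hz : ∀ r : Fin N, w' r y ≠ 0
              · have hb : w la (Fin.snoc y a) ≤ c la := by
                  refine hbound la hlaF _ ?_
                  intro r hr
                  obtain ⟨r', rfl⟩ := Fin.exists_castSucc_eq.mpr (ne_of_lt hr)
                  rw [hsnoc]
                  exact hz r'
                calc (∏ l, w' l y) * w la (Fin.snoc y a)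
                    ≤ (∏ l, w' l y) * c la := mul_le_mul_of_nonneg_left hb (hWnn y)
                  _ = c la * ∏ l, w' l y := mul_comm _ _
              · push_neg at hz
                obtain ⟨r, hr⟩ := hz
                rw [Finset.prod_eq_zero (Finset.mem_univ r) hr]
                simp
            · rw [if_neg hPa]
              have hcnn := hc0 la hlaF
              split_ifs with h1 h2
              · exact mul_nonneg hcnn (hWnn y)
              · exact le_refl 0
              · exact le_refl 0
          calc (∑ a : α, if ∀ l ∈ F, (Fin.snoc y a : Fin (N + 1) → α) l = v l then ∏ l, w l (Fin.snoc y a) else 0)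
              ≤ ∑ a : α, (if a = v la then
                  (if ∀ l ∈ F', y l = v' l then c la * ∏ l, w' l y else 0) else 0) :=
                Finset.sum_le_sum fun a _ => hterm a
            _ = (if ∀ l ∈ F', y l = v' l then c la * ∏ l, w' l y else 0) := by simp
        calc ∑ y : Fin N → α, ∑ a : α,
              (if ∀ l ∈ F, (Fin.snoc y a : Fin (N + 1) → α) l = v l then ∏ l, w l (Fin.snoc y a) else 0)
            ≤ ∑ y : Fin N → α,
              (if ∀ l ∈ F', y l = v' l then c la * ∏ l, w' l y else 0) :=
              Finset.sum_le_sum fun y _ => key y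
          _ = c la * ∑ y : Fin N → α, (if ∀ l ∈ F', y l = v' l then ∏ l, w' l y else 0) := by
              rw [Finset.mul_sum]
              exact Finset.sum_congr rfl fun y _ => by split_ifs <;> simp
          _ ≤ c la * ∏ l ∈ F', c' l := by
              refine mul_le_mul_of_nonneg_left ?_ (hc0 la hlaF)
              rw [← Finset.sum_filter]
              exact ihW
          _ = ∏ l ∈ F, c l := by rw [hprodF', Finset.mul_prod_erase F c hlaF]
      · -- last coordinate is free
        have key : ∀ y : Fin N → α,
            (∑ a : α, if ∀ l ∈ F, (Fin.snoc y a : Fin (N + 1) → α) l = v l then ∏ l, w l (Fin.snoc y a) else 0)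
              ≤ (if ∀ l ∈ F', y l = v' l then ∏ l, w' l y else 0) := by
          intro y
          by_cases hP' : ∀ l ∈ F', y l = v' l
          · have hcond : ∀ a : α, (∀ l ∈ F, (Fin.snoc y a : Fin (N + 1) → α) l = v l) := fun a =>
              (hP y a).mpr ⟨hP', fun h => absurd h hlaF⟩
            rw [if_pos hP']
            calc (∑ a : α, if ∀ l ∈ F, (Fin.snoc y a : Fin (N + 1) → α) l = v l then ∏ l, w l (Fin.snoc y a) else 0)
                = ∑ a : α, (∏ l, w' l y) * w la (Fin.snoc y a) := by
                  refine Finset.sum_congr rfl fun a _ => ?_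
                  rw [if_pos (hcond a), hprodsplit]
              _ = (∏ l, w' l y) * ∑ a : α, w la (Fin.snoc y a) := by rw [Finset.mul_sum]
              _ ≤ (∏ l, w' l y) * 1 := by
                  refine mul_le_mul_of_nonneg_left ?_ (hWnn y)
                  calc ∑ a : α, w la (Fin.snoc y a)
                      = ∑ a : α, w la (Function.update (Fin.snoc y arb) la a) := by
                        refine Finset.sum_congr rfl fun a _ => ?_
                        rw [hla_def, Fin.update_snoc_last]
                    _ ≤ 1 := hsum _ _
              _ = ∏ l, w' l y := mul_one _
          · rw [if_neg hP']
            have hno : ∀ a : α, ¬ (∀ l ∈ F, (Fin.snoc y a : Fin (N + 1) → α) l = v l) := by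
              intro a h
              exact hP' ((hP y a).mp h).1
            calc (∑ a : α, if ∀ l ∈ F, (Fin.snoc y a : Fin (N + 1) → α) l = v l then ∏ l, w l (Fin.snoc y a) else 0)
                = 0 := Finset.sum_eq_zero fun a _ => if_neg (hno a)
              _ ≤ 0 := le_refl 0
        calc ∑ y : Fin N → α, ∑ a : α,
              (if ∀ l ∈ F, (Fin.snoc y a : Fin (N + 1) → α) l = v l then ∏ l, w l (Fin.snoc y a) else 0)
            ≤ ∑ y : Fin N → α, (if ∀ l ∈ F', y l = v' l then ∏ l, w' l y else 0) :=
              Finset.sum_le_sum fun y _ => key y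
          _ ≤ ∏ l ∈ F', c' l := by rw [← Finset.sum_filter]; exact ihW
          _ = ∏ m ∈ F.erase la, c m := hprodF'
          _ = ∏ l ∈ F, c l := by rw [Finset.erase_eq_of_notMem hlaF]

theorem stmt14 {α : Type*} [Fintype α] (T : Finset α) (hT : T.Nonempty)
    (d : α → α → ℝ) (hsym : ∀ x y, d x y = d y x) (Δ : ℝ)
    (ε : ℝ) (hε0 : 0 < ε) (hε1 : ε < 1) (M : ℕ)
    (hcard : ∀ (i : Fin M) (x : Fin M → α),
      (∀ j : Fin M, j < i → x j ∈ T) →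
      (∀ j k : Fin M, k < j → j < i → d (x j) (x k) > Δ) →
      (1 - ε) * T.card ≤ ((T.filter fun y => ∀ j : Fin M, j < i → d y (x j) > Δ).card : ℝ))
    (i j k : Fin M) (hij : i < j) (hjk : j < k) (xi xj xk : α)
    (hdij : d xi xj > Δ) (hdik : d xi xk > Δ) (hdjk : d xj xk > Δ) :
    (∑ x ∈ Finset.univ.filter
        (fun x : Fin M → α => x i = xi ∧ x j = xj ∧ x k = xk),
        ∏ l, (if x l ∈ T.filter (fun y => ∀ r : Fin M, r < l → d y (x r) > Δ)
              then (1 : ℝ) / (T.filter fun y => ∀ r : Fin M, r < l → d y (x r) > Δ).card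
              else 0))
      ≤ 1 / ((1 - ε) ^ 3 * (T.card : ℝ) ^ 3) := by
  classical
  have hne : Nonempty α := ⟨hT.choose⟩
  have hTpos : (0 : ℝ) < T.card := by exact_mod_cast Finset.card_pos.mpr hT
  have h1ε : (0 : ℝ) < 1 - ε := by linarith
  set S : Fin M → (Fin M → α) → Finset α :=
    fun l x => T.filter (fun y => ∀ r : Fin M, r < l → d y (x r) > Δ) with hS
  set w : Fin M → (Fin M → α) → ℝ :=
    fun l x => if x l ∈ S l x then (1 : ℝ) / (S l x).card else 0 with hw
  have hSdep : ∀ (l : Fin M) (x y : Fin M → α), (∀ r, r < l → x r = y r) → S l x = S l y := by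
    intro l x y h
    apply Finset.filter_congr
    intro z _
    constructor <;> intro hz r hr
    · rw [← h r hr]; exact hz r hr
    · rw [h r hr]; exact hz r hr
  have hdep : ∀ l (x y : Fin M → α), (∀ r, r ≤ l → x r = y r) → w l x = w l y := by
    intro l x y h
    have hSe : S l x = S l y := hSdep l x y fun r hr => h r (le_of_lt hr)
    simp only [hw, hSe, h l (le_refl l)]
  have hnn : ∀ l (x : Fin M → α), 0 ≤ w l x := by
    intro l x
    simp only [hw]
    split_ifs
    · positivity
    · exact le_refl 0
  have hsum : ∀ l (x : Fin M → α), ∑ a : α, w l (Function.update x l a) ≤ 1 := by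
    intro l x
    have hSu : ∀ a : α, S l (Function.update x l a) = S l x := fun a =>
      hSdep l _ _ fun r hr => Function.update_of_ne (ne_of_lt hr) _ _
    have hrw : ∀ a : α, w l (Function.update x l a)
        = if a ∈ S l x then (1 : ℝ) / (S l x).card else 0 := by
      intro a
      simp only [hw, hSu, Function.update_self]
    rw [Finset.sum_congr rfl fun a _ => hrw a]
    rcases (S l x).eq_empty_or_nonempty with h | h
    · simp [h]
    · have hcne : ((S l x).card : ℝ) ≠ 0 := by
        exact_mod_cast Finset.card_ne_zero.mpr h
      rw [Finset.sum_ite_mem, Finset.univ_inter, Finset.sum_const, nsmul_eq_mul,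
        mul_one_div, div_self hcne]
  set c0 : ℝ := 1 / ((1 - ε) * T.card) with hc0def
  have hc0 : 0 ≤ c0 := by positivity
  have hbound : ∀ l : Fin M, ∀ x : Fin M → α, (∀ r, r < l → w r x ≠ 0) → w l x ≤ c0 := by
    intro l x hx
    have hmem : ∀ r, r < l → x r ∈ S r x := by
      intro r hr
      by_contra h
      exact hx r hr (by simp [hw, h])
    have h1 : ∀ r : Fin M, r < l → x r ∈ T := fun r hr =>
      (Finset.mem_filter.mp (hmem r hr)).1
    have h2 : ∀ r s : Fin M, s < r → r < l → d (x r) (x s) > Δ := fun r s hsr hrl =>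
      (Finset.mem_filter.mp (hmem r hrl)).2 s hsr
    have hSc : (1 - ε) * T.card ≤ ((S l x).card : ℝ) := hcard l x h1 h2
    simp only [hw]
    split_ifs with hm
    · rw [hc0def]
      exact one_div_le_one_div_of_le (by positivity) hSc
    · exact hc0
  set F : Finset (Fin M) := {i, j, k} with hF
  set v : Fin M → α := fun l => if l = i then xi else if l = j then xj else xk with hv
  have hij' : i ≠ j := ne_of_lt hij
  have hjk' : j ≠ k := ne_of_lt hjk
  have hik' : i ≠ k := ne_of_lt (lt_trans hij hjk)
  have hji' : j ≠ i := hij'.symm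
  have hkj' : k ≠ j := hjk'.symm
  have hki' : k ≠ i := hik'.symm
  have hvi : v i = xi := by simp [hv]
  have hvj : v j = xj := by simp [hv, hji']
  have hvk : v k = xk := by simp [hv, hki', hkj']
  have hset : (Finset.univ.filter fun x : Fin M → α => x i = xi ∧ x j = xj ∧ x k = xk)
      = Finset.univ.filter (fun x : Fin M → α => ∀ l ∈ F, x l = v l) := by
    ext x
    simp only [Finset.mem_filter, Finset.mem_univ, true_and, hF, Finset.mem_insert,
      Finset.mem_singleton]
    constructor
    · rintro ⟨h1, h2, h3⟩ l hl
      rcases hl with rfl | rfl | rfl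
      · rw [hvi]; exact h1
      · rw [hvj]; exact h2
      · rw [hvk]; exact h3
    · intro h
      exact ⟨hvi ▸ h i (Or.inl rfl), hvj ▸ h j (Or.inr (Or.inl rfl)),
        hvk ▸ h k (Or.inr (Or.inr rfl))⟩
  have hFcard : F.card = 3 := by
    rw [hF, Finset.card_insert_of_notMem (by simp [hij', hik']),
      Finset.card_insert_of_notMem (by simp [hjk']), Finset.card_singleton]
  calc (∑ x ∈ Finset.univ.filter
        (fun x : Fin M → α => x i = xi ∧ x j = xj ∧ x k = xk),
        ∏ l, (if x l ∈ T.filter (fun y => ∀ r : Fin M, r < l → d y (x r) > Δ)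
              then (1 : ℝ) / (T.filter fun y => ∀ r : Fin M, r < l → d y (x r) > Δ).card
              else 0))
      = ∑ x ∈ Finset.univ.filter (fun x : Fin M → α => ∀ l ∈ F, x l = v l), ∏ l, w l x := by
        rw [hset]
    _ ≤ ∏ l ∈ F, c0 :=
        aux_rgv M w hdep hnn hsum F v (fun _ => c0) (fun _ _ => hc0)
          (fun l _ x hx => hbound l x hx)
    _ = c0 ^ 3 := by rw [Finset.prod_const, hFcard]
    _ = 1 / ((1 - ε) ^ 3 * (T.card : ℝ) ^ 3) := by
        rw [hc0def, div_pow, one_pow, mul_pow]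
end

section
/- Quantization preserving a linear constraint: let c : Y → ℝ be a function on a finite set Y, n ≥ 1, and p a probability vector on Y with Σ_y p(y)·c(y) ≥ 0. Then there exists a probability vector q on Y with q(y) ∈ (1/n)·ℤ for all y, Σ_y q(y)·c(y) ≥ Σ_y p(y)·c(y) ≥ 0, and Σ_y |q(y) − p(y)| ≤ |Y|/n. -/
lemma exists_top {Y : Type*} [DecidableEq Y] (c : Y → ℝ) :
    ∀ d (s : Finset Y), d ≤ s.card →
      ∃ t, t ⊆ s ∧ t.card = d ∧ ∀ x ∈ t, ∀ y ∈ s \ t, c y ≤ c x := by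
  intro d
  induction d with
  | zero => intro s _; exact ⟨∅, by simp, by simp, by simp⟩
  | succ d ih =>
    intro s hd
    have hs : s.Nonempty := Finset.card_pos.mp (by omega)
    obtain ⟨a, ha, hmax⟩ := Finset.exists_max_image s c hs
    have hcard : d ≤ (s.erase a).card := by
      rw [Finset.card_erase_of_mem ha]; omega
    obtain ⟨t, hts, htc, htop⟩ := ih (s.erase a) hcard
    refine ⟨insert a t, ?_, ?_, ?_⟩
    · exact Finset.insert_subset ha (hts.trans (Finset.erase_subset _ _))
    · rw [Finset.card_insert_of_notMem (fun h => (Finset.mem_erase.mp (hts h)).1 rfl), htc]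
    · intro x hx y hy
      rcases Finset.mem_insert.mp hx with rfl | hx'
      · exact hmax y (Finset.mem_sdiff.mp hy).1
      · apply htop x hx'
        rw [Finset.mem_sdiff] at hy ⊢
        refine ⟨Finset.mem_erase.mpr ⟨?_, hy.1⟩, fun h => hy.2 (Finset.mem_insert_of_mem h)⟩
        rintro rfl; exact hy.2 (Finset.mem_insert_self _ _)

theorem stmt18 {Y : Type*} [Fintype Y] (c : Y → ℝ) (n : ℕ) (hn : 1 ≤ n)
    (p : Y → ℝ) (hp : ∀ y, 0 ≤ p y) (hsum : ∑ y, p y = 1)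
    (hc : 0 ≤ ∑ y, p y * c y) :
    ∃ q : Y → ℝ, (∀ y, 0 ≤ q y) ∧ (∑ y, q y = 1) ∧
      (∀ y, ∃ k : ℤ, q y = (k : ℝ) / n) ∧
      (∑ y, p y * c y ≤ ∑ y, q y * c y) ∧ (0 ≤ ∑ y, q y * c y) ∧
      (∑ y, |q y - p y| ≤ (Fintype.card Y : ℝ) / n) := by
  classical
  have hn0 : (0:ℝ) < n := by exact_mod_cast Nat.lt_of_lt_of_le Nat.zero_lt_one hn
  set m : Y → ℤ := fun y => ⌊(n:ℝ) * p y⌋ with hm_def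
  set f : Y → ℝ := fun y => Int.fract ((n:ℝ) * p y) with hf_def
  have hm0 : ∀ y, 0 ≤ m y := fun y => Int.floor_nonneg.mpr (mul_nonneg hn0.le (hp y))
  have hf0 : ∀ y, 0 ≤ f y := fun y => Int.fract_nonneg _
  have hf1 : ∀ y, f y < 1 := fun y => Int.fract_lt_one _
  have hmf : ∀ y, (m y : ℝ) = (n:ℝ) * p y - f y := by
    intro y; simp only [hm_def, hf_def]
    exact (Int.self_sub_fract _).symm
  have hsumm : ∑ y, (m y : ℝ) = (n:ℝ) - ∑ y, f y := by
    rw [show (∑ y, (m y : ℝ)) = ∑ y, ((n:ℝ) * p y - f y) from Finset.sum_congr rfl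
      (fun y _ => hmf y)]
    rw [Finset.sum_sub_distrib, ← Finset.mul_sum, hsum, mul_one]
  set D : ℤ := (n : ℤ) - ∑ y, m y with hD_def
  have hDf : (D : ℝ) = ∑ y, f y := by
    rw [hD_def, Int.cast_sub, Int.cast_natCast, Int.cast_sum, hsumm]; ring
  have hD0 : 0 ≤ D := by
    have : (0:ℝ) ≤ (D:ℝ) := by
      rw [hDf]; exact Finset.sum_nonneg (fun y _ => hf0 y)
    exact_mod_cast this
  have hYne : (Finset.univ : Finset Y).Nonempty := by
    rcases (Finset.univ : Finset Y).eq_empty_or_nonempty with h | h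
    · rw [h] at hsum; simp at hsum
    · exact h
  have hDlt : (D : ℝ) < Fintype.card Y := by
    rw [hDf]
    calc ∑ y, f y < ∑ _y : Y, (1:ℝ) :=
          Finset.sum_lt_sum_of_nonempty hYne (fun y _ => hf1 y)
      _ = Fintype.card Y := by simp
  set d : ℕ := D.toNat with hd_def
  have hdD : (d : ℝ) = (D : ℝ) := by
    rw [hd_def]; exact_mod_cast Int.toNat_of_nonneg hD0
  have hdlt : d < Fintype.card Y := by
    have : (d : ℝ) < Fintype.card Y := hdD ▸ hDlt
    exact_mod_cast this
  obtain ⟨S, hSsub, hScard, hStop⟩ :=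
    exists_top c d (Finset.univ : Finset Y)
      (by rw [Finset.card_univ]; exact hdlt.le)
  set ι : Y → ℝ := fun y => if y ∈ S then 1 else 0 with hι_def
  have hι0 : ∀ y, 0 ≤ ι y := by intro y; simp [hι_def]; split <;> norm_num
  set q : Y → ℝ := fun y => ((m y : ℝ) + ι y) / n with hq_def
  have hqp : ∀ y, q y - p y = (ι y - f y) / n := by
    intro y
    rw [hq_def]
    field_simp
    rw [hmf y]; ring
  have hsumι : ∑ y, ι y = (d : ℝ) := by
    rw [hι_def]
    rw [Finset.sum_ite_mem, Finset.univ_inter, Finset.sum_const, hScard]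
    simp
  -- sum of q is 1
  have hsumq : ∑ y, q y = 1 := by
    rw [hq_def]
    rw [← Finset.sum_div, Finset.sum_add_distrib, hsumι, hsumm, hdD, hDf]
    field_simp
    ring
  -- balance: sum of (ι - f) = 0
  have hbal : ∑ y, (ι y - f y) = 0 := by
    rw [Finset.sum_sub_distrib, hsumι, hdD, hDf, sub_self]
  -- key inequality
  have hkey : 0 ≤ ∑ y, (ι y - f y) * c y := by
    rcases S.eq_empty_or_nonempty with hS | hS
    · have hd0 : (D : ℝ) = 0 := by
        rw [← hdD]; norm_cast; rw [← hScard, hS, Finset.card_empty]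
      have hfz : ∀ y ∈ Finset.univ, f y = 0 := by
        rw [← Finset.sum_eq_zero_iff_of_nonneg (fun y _ => hf0 y), ← hDf, hd0]
      have : ∀ y ∈ Finset.univ, (ι y - f y) * c y = 0 := by
        intro y hy
        rw [hfz y hy, hι_def]
        simp [hS]
      rw [Finset.sum_congr rfl this]; simp
    · obtain ⟨x₀, hx₀, hmin⟩ := Finset.exists_min_image S c hS
      have step : ∀ y ∈ Finset.univ, (ι y - f y) * c x₀ ≤ (ι y - f y) * c y := by
        intro y _
        by_cases hyS : y ∈ S
        · have h1 : 0 ≤ ι y - f y := by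
            rw [hι_def]; simp [hyS]; linarith [hf1 y]
          exact mul_le_mul_of_nonneg_left (hmin y hyS) h1
        · have h1 : ι y - f y ≤ 0 := by
            rw [hι_def]; simp [hyS]; exact hf0 y
          have h2 : c y ≤ c x₀ :=
            hStop x₀ hx₀ y (Finset.mem_sdiff.mpr ⟨Finset.mem_univ y, hyS⟩)
          nlinarith
      calc (0:ℝ) = (∑ y, (ι y - f y)) * c x₀ := by rw [hbal, zero_mul]
        _ = ∑ y, (ι y - f y) * c x₀ := by rw [Finset.sum_mul]
        _ ≤ ∑ y, (ι y - f y) * c y := Finset.sum_le_sum step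
  have hmono : ∑ y, p y * c y ≤ ∑ y, q y * c y := by
    have : ∑ y, q y * c y - ∑ y, p y * c y = (∑ y, (ι y - f y) * c y) / n := by
      rw [← Finset.sum_sub_distrib, Finset.sum_div]
      refine Finset.sum_congr rfl (fun y _ => ?_)
      rw [show q y * c y - p y * c y = (q y - p y) * c y by ring, hqp y]
      ring
    have h2 : 0 ≤ (∑ y, (ι y - f y) * c y) / n := div_nonneg hkey hn0.le
    linarith
  refine ⟨q, ?_, hsumq, ?_, hmono, le_trans hc hmono, ?_⟩
  · intro y
    exact div_nonneg (add_nonneg (by exact_mod_cast hm0 y) (hι0 y)) hn0.le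
  · intro y
    refine ⟨m y + if y ∈ S then 1 else 0, ?_⟩
    rw [hq_def, hι_def]
    push_cast
    split <;> simp
  · calc ∑ y, |q y - p y| ≤ ∑ _y : Y, (1:ℝ)/n := by
          refine Finset.sum_le_sum (fun y _ => ?_)
          rw [hqp y, abs_div, abs_of_pos hn0]
          have habs : |ι y - f y| ≤ 1 := by
            by_cases hyS : y ∈ S
            · rw [hι_def]; simp only [hyS, if_true]
              rw [abs_of_nonneg (by linarith [hf1 y])]
              linarith [hf0 y]
            · rw [hι_def]; simp only [hyS, if_false]
              rw [abs_of_nonpos (by linarith [hf0 y])]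
              linarith [hf1 y]
          gcongr
      _ = (Fintype.card Y : ℝ) / n := by
          rw [Finset.sum_const, Finset.card_univ]; simp [div_eq_mul_inv]
end
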